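/- Let G be a group with elements a_1, ..., a_{g-1}, u_1, ..., u_{g-1} satisfying the braid relations within each family, a_i u_j = u_j a_i for |i-j|>1, a_i u_{i+1} u_i = u_{i+1} u_i a_{i+1}, a_{i+1} u_i u_{i+1} = u_i u_{i+1} a_i, a_1 u_1 a_1 = u_1, u_2 a_1 a_2 u_1 = a_1 a_2, together with (u_{g-1} ⋯ u_1)(u_1 ⋯ u_{g-1}) = 1, (u_1 ⋯ u_{g-1})^g = 1, and the relation a_1 (a_2 ⋯ a_{g-1} u_{g-1} ⋯ u_2) a_1 = a_2 ⋯ a_{g-1} u_{g-1} ⋯ u_2. Set r = a_1 ⋯ a_{g-1} u_{g-1} ⋯ u_1. Then r a_i = a_i r and u_i r u_i = r for all i = 1, ..., g-1. -/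

import Mathlib

variable {G : Type*} [Group G]

/-- `prodAsc f m = f 1 * f 2 * ⋯ * f m` (empty product for `m = 0`). -/
def prodAsc (f : ℕ → G) (m : ℕ) : G :=
  ((List.range m).map (fun i => f (i + 1))).prod

/-- `prodDesc f m = f m * ⋯ * f 2 * f 1` (empty product for `m = 0`). -/
def prodDesc (f : ℕ → G) (m : ℕ) : G :=
  (((List.range m).reverse).map (fun i => f (i + 1))).prod

/-- The fundamental braid element: `Δ 0 = Δ 1 = 1`, `Δ (m+1) = (u 1 ⋯ u m) * Δ m`. -/
def braidDelta (u : ℕ → G) : ℕ → G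
  | 0 => 1
  | m + 1 => prodAsc u m * braidDelta u m

/-!
Write `n = g - 1`, `A = a₁⋯aₙ` and `V = u₁⋯uₙ`; by (B4a), `uₙ⋯u₁ = V⁻¹`, so `r = A V⁻¹`.
The braid relations and (C1), (C3) make conjugation by `A` shift the `aᵢ` and conjugation by `V`
shift both the `aᵢ` and the `uᵢ` up by one index. This gives (E3a) for `i ≥ 2` at once, and (E4a)
for `i ≥ 2` after transporting (C5) along the shift. Relations (D) and (C4) say that `a₁` inverts
both `a₂⋯aₙ uₙ⋯u₂` and `u₁` under conjugation, so `a₁` commutes with `a₂⋯aₙ V⁻¹`: this is (E3a)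
for `i = 1`. Since `Vⁿ⁺¹ = 1` (B3), the shift closes up cyclically (`V aₙ V⁻¹ = V⁻¹ a₁ V`), and
then `V A V⁻¹ = a₂⋯aₙ V⁻¹ a₁ V = A`. So `V` commutes with `r`, and (E4a) for `i = 1` is the case
`i = 2` conjugated by `V` (for `n = 1`, it follows from `V = u₁` and `V² = 1`).
-/

theorem prodAsc_succ (f : ℕ → G) (m : ℕ) : prodAsc f (m + 1) = prodAsc f m * f (m + 1) := by
  simp [prodAsc, List.range_succ]

theorem prodAsc_succ' (f : ℕ → G) (m : ℕ) :
    prodAsc f (m + 1) = f 1 * prodAsc (fun j => f (j + 1)) m := by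
  simp [prodAsc, List.range_succ_eq_map, List.map_map, Function.comp_def]

theorem prodDesc_succ' (f : ℕ → G) (m : ℕ) :
    prodDesc f (m + 1) = prodDesc (fun j => f (j + 1)) m * f 1 := by
  simp [prodDesc, List.range_succ_eq_map, List.map_map, Function.comp_def]

theorem commute_prodAsc {x : G} {f : ℕ → G} {m : ℕ}
    (h : ∀ j, 1 ≤ j → j ≤ m → Commute x (f j)) : Commute x (prodAsc f m) := by
  induction m with
  | zero => exact Commute.one_right x
  | succ m ih =>
    rw [prodAsc_succ]
    exact (ih fun j h1 h2 => h j h1 (by omega)).mul_right (h _ (by omega) le_rfl)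

theorem mul_prodAsc_eq_of_adjacent {b : ℕ → G} {x y : G} {k n : ℕ} (hkn : k + 2 ≤ n)
    (hx : ∀ j, 1 ≤ j → j ≤ k → Commute x (b j))
    (hy : ∀ j, k + 3 ≤ j → j ≤ n → Commute y (b j))
    (hxy : x * (b (k + 1) * b (k + 2)) = b (k + 1) * b (k + 2) * y) :
    x * prodAsc b n = prodAsc b n * y := by
  induction n, hkn using Nat.le_induction with
  | base =>
    rw [prodAsc_succ, prodAsc_succ, mul_assoc (prodAsc b k), ← mul_assoc,
      (commute_prodAsc hx).eq, mul_assoc, hxy]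
    simp only [mul_assoc]
  | succ n hn ih =>
    rw [prodAsc_succ, ← mul_assoc, ih fun j h1 h2 => hy j h1 (by omega), mul_assoc,
      (hy (n + 1) (by omega) le_rfl).eq, mul_assoc]

def Shifts (x : G) (c : ℕ → G) (n : ℕ) : Prop :=
  ∀ i, 1 ≤ i → i + 1 ≤ n → x * c i = c (i + 1) * x

namespace Shifts

variable {x y : G} {c d : ℕ → G} {n : ℕ}

theorem inv_mul (h : Shifts x c n) {i : ℕ} (hi : 1 ≤ i) (hin : i + 1 ≤ n) :
    x⁻¹ * c (i + 1) = c i * x⁻¹ := by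
  rw [inv_mul_eq_iff_eq_mul, ← mul_assoc, h i hi hin, mul_inv_cancel_right]

theorem conj_apply (h : Shifts x c n) {i : ℕ} (hi : 1 ≤ i) (hin : i + 1 ≤ n) :
    MulAut.conj x (c i) = c (i + 1) := by
  rw [MulAut.conj_apply, h i hi hin, mul_inv_cancel_right]

theorem pow_mul (h : Shifts x c n) : ∀ k, k + 1 ≤ n → x ^ k * c 1 = c (k + 1) * x ^ k
  | 0, _ => by simp
  | k + 1, hk => by
    rw [pow_succ', mul_assoc, h.pow_mul k (by omega), ← mul_assoc, h _ (by omega) hk, mul_assoc]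

theorem mul_prodAsc (h : Shifts x c n) {m : ℕ} (hm : m + 1 ≤ n) :
    x * prodAsc c m = prodAsc (fun j => c (j + 1)) m * x := by
  induction m with
  | zero => simp [prodAsc]
  | succ m ih =>
    rw [prodAsc_succ, prodAsc_succ, ← mul_assoc, ih (by omega), mul_assoc,
      h _ (by omega) hm, mul_assoc]

theorem conj_last {m : ℕ} (h : Shifts x c (m + 1)) (hx : x ^ (m + 2) = 1) :
    x * c (m + 1) * x⁻¹ = x⁻¹ * c 1 * x := by
  have hxm : x ^ m = (x ^ 2)⁻¹ := eq_inv_of_mul_eq_one_left (by rwa [← pow_add])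
  have hc : c (m + 1) = x ^ m * c 1 * (x ^ m)⁻¹ := eq_mul_inv_of_mul_eq (h.pow_mul m le_rfl).symm
  rw [hc, hxm]
  group

theorem commute_mul_inv (hx : Shifts x c n) (hy : Shifts y c n) {i : ℕ} (hi : 2 ≤ i)
    (hin : i ≤ n) : Commute (y * x⁻¹) (c i) := by
  obtain ⟨k, rfl⟩ : ∃ k, i = k + 1 := ⟨i - 1, by omega⟩
  rw [Commute, SemiconjBy, mul_assoc, hx.inv_mul (by omega) hin, ← mul_assoc,
    hy k (by omega) hin, mul_assoc]

theorem propagate (hc : Shifts x c n) (hd : Shifts x d n)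
    (h : d 2 * c 1 * c 2 * d 1 = c 1 * c 2) :
    ∀ k, k + 2 ≤ n → d (k + 2) * c (k + 1) * c (k + 2) * d (k + 1) = c (k + 1) * c (k + 2)
  | 0, _ => h
  | k + 1, hk => by
    have := congrArg (MulAut.conj x) (propagate hc hd h k (by omega))
    simp only [map_mul, hc.conj_apply (i := k + 1) (by omega) (by omega),
      hc.conj_apply (i := k + 2) (by omega) (by omega),
      hd.conj_apply (i := k + 1) (by omega) (by omega),
      hd.conj_apply (i := k + 2) (by omega) (by omega)] at this
    exact this

end Shifts

theorem shifts_prodAsc {b c : ℕ → G} {n : ℕ}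
    (hcomm : ∀ i j, 1 ≤ i → i ≤ n → 1 ≤ j → j ≤ n → (i + 2 ≤ j ∨ j + 2 ≤ i) →
      Commute (c i) (b j))
    (hrel : ∀ i, 1 ≤ i → i + 1 ≤ n → c (i + 1) * (b i * b (i + 1)) = b i * b (i + 1) * c i) :
    Shifts (prodAsc b n) c n := by
  intro i hi hin
  obtain ⟨k, rfl⟩ : ∃ k, i = k + 1 := ⟨i - 1, by omega⟩
  refine (mul_prodAsc_eq_of_adjacent hin (fun j h1 h2 => ?_) (fun j h1 h2 => ?_)
    (hrel _ hi hin)).symm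
  · exact hcomm _ _ (by omega) hin h1 (by omega) (by omega)
  · exact hcomm _ _ hi (by omega) (by omega) h2 (by omega)

theorem shifts_prodAsc_of_braid {b : ℕ → G} {n : ℕ}
    (hcomm : ∀ i j, 1 ≤ i → i + 2 ≤ j → j ≤ n → b i * b j = b j * b i)
    (hbraid : ∀ i, 1 ≤ i → i + 1 ≤ n → b i * b (i + 1) * b i = b (i + 1) * b i * b (i + 1)) :
    Shifts (prodAsc b n) b n :=
  shifts_prodAsc
    (fun i j hi _ hj hjn hij => hij.elim (fun h => hcomm i j hi h hjn)
      fun h => (hcomm j i hj h (by omega)).symm)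
    fun i hi hin => by rw [← mul_assoc]; exact (hbraid i hi hin).symm

theorem commute_mul_of_mul_mul_eq {x y z : G} (hy : x * y * x = y) (hz : x * z * x = z) :
    Commute x (y * z) := by
  have hxy : x * y = y * x⁻¹ := eq_mul_inv_of_mul_eq hy
  have hxz : x⁻¹ * z = z * x := inv_mul_eq_of_eq_mul (by rw [← mul_assoc, hz])
  calc x * (y * z) = y * (x⁻¹ * z) := by rw [← mul_assoc, hxy, mul_assoc]
    _ = y * z * x := by rw [hxz, mul_assoc]

section Relations

variable {a u : ℕ → G} {V : G} {m : ℕ}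

theorem commute_prodAsc_of_shifts (hVa : Shifts V a (m + 1)) (hV : V ^ (m + 2) = 1)
    (htail : Commute (a 1) (prodAsc (fun j => a (j + 1)) m * V⁻¹)) :
    Commute (prodAsc a (m + 1)) V := by
  have hconj : V * prodAsc a (m + 1) * V⁻¹ = prodAsc a (m + 1) := calc
    V * prodAsc a (m + 1) * V⁻¹ = V * prodAsc a m * V⁻¹ * (V * a (m + 1) * V⁻¹) := by
      rw [prodAsc_succ]; simp only [mul_assoc, inv_mul_cancel_left]
    _ = prodAsc (fun j => a (j + 1)) m * V⁻¹ * a 1 * V := by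
      rw [hVa.mul_prodAsc le_rfl, mul_inv_cancel_right, hVa.conj_last hV]
      simp only [mul_assoc]
    _ = a 1 * (prodAsc (fun j => a (j + 1)) m * V⁻¹) * V := by rw [htail.eq]
    _ = prodAsc a (m + 1) := by rw [mul_assoc, inv_mul_cancel_right, prodAsc_succ']
  exact (mul_inv_eq_iff_eq_mul.mp hconj).symm

theorem commute_prodAsc_mul_inv (hA : Shifts (prodAsc a (m + 1)) a (m + 1))
    (hVa : Shifts V a (m + 1)) (htail : Commute (a 1) (prodAsc (fun j => a (j + 1)) m * V⁻¹))
    {i : ℕ} (hi : 1 ≤ i) (hin : i ≤ m + 1) : Commute (prodAsc a (m + 1) * V⁻¹) (a i) := by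
  obtain rfl | hi2 := eq_or_lt_of_le hi
  · rw [prodAsc_succ', mul_assoc]
    exact ((Commute.refl _).mul_right htail).symm
  · exact hVa.commute_mul_inv hA hi2 hin

theorem mul_prodAsc_mul_inv_mul_eq {n : ℕ}
    (hau : ∀ i j, 1 ≤ i → i ≤ n → 1 ≤ j → j ≤ n → (i + 2 ≤ j ∨ j + 2 ≤ i) →
      Commute (a i) (u j))
    (hVa : Shifts V a n) (hVu : Shifts V u n) (h : u 2 * a 1 * a 2 * u 1 = a 1 * a 2)
    {k : ℕ} (hk : k + 2 ≤ n) :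
    u (k + 2) * (prodAsc a n * V⁻¹) * u (k + 2) = prodAsc a n * V⁻¹ := by
  have hpair : u (k + 2) * (a (k + 1) * a (k + 2)) = a (k + 1) * a (k + 2) * (u (k + 1))⁻¹ :=
    eq_mul_inv_of_mul_eq (by simpa only [mul_assoc] using hVa.propagate hVu h k hk)
  have hAu : u (k + 2) * prodAsc a n = prodAsc a n * (u (k + 1))⁻¹ :=
    mul_prodAsc_eq_of_adjacent hk
      (fun j h1 h2 => (hau j (k + 2) h1 (by omega) (by omega) hk (by omega)).symm)
      (fun j h1 h2 => (hau j (k + 1) (by omega) h2 (by omega) (by omega) (by omega)).symm.inv_left)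
      hpair
  calc u (k + 2) * (prodAsc a n * V⁻¹) * u (k + 2)
      = u (k + 2) * prodAsc a n * (V⁻¹ * u (k + 2)) := by simp only [mul_assoc]
    _ = prodAsc a n * V⁻¹ := by
      rw [hAu, hVu.inv_mul (by omega) (by omega), mul_assoc, inv_mul_cancel_left]

theorem mul_mul_self_eq_of_commute_prodAsc {r : G}
    (hVu : Shifts (prodAsc u (m + 1)) u (m + 1)) (hV : prodAsc u (m + 1) ^ (m + 2) = 1)
    (hr : Commute r (prodAsc u (m + 1))) (h2 : 1 ≤ m → u 2 * r * u 2 = r) :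
    u 1 * r * u 1 = r := by
  set V := prodAsc u (m + 1)
  obtain rfl | hm := Nat.eq_zero_or_pos m
  · have hV1 : V = u 1 := by simp [V, prodAsc]
    rw [hV1, zero_add] at hV
    rw [hV1] at hr
    rw [mul_assoc, hr.eq, ← mul_assoc, ← sq, hV, one_mul]
  · have hu1 : u 1 = V⁻¹ * (u 2 * V) := eq_inv_mul_of_mul_eq (hVu 1 le_rfl (by omega))
    have hrV : V * r * V⁻¹ = r := mul_inv_eq_of_eq_mul hr.eq.symm
    calc u 1 * r * u 1 = V⁻¹ * (u 2 * (V * r * V⁻¹) * u 2) * V := by rw [hu1]; group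
      _ = r := by rw [hrV, h2 hm, mul_assoc, hr.eq, inv_mul_cancel_left]

end Relations

theorem rel_E3a_E4a_general (g : ℕ) (a u : ℕ → G)
    (ha1 : ∀ i j, 1 ≤ i → i + 2 ≤ j → j ≤ g - 1 → a i * a j = a j * a i)
    (ha2 : ∀ i, 1 ≤ i → i + 1 ≤ g - 1 → a i * a (i + 1) * a i = a (i + 1) * a i * a (i + 1))
    (hu1 : ∀ i j, 1 ≤ i → i + 2 ≤ j → j ≤ g - 1 → u i * u j = u j * u i)
    (hu2 : ∀ i, 1 ≤ i → i + 1 ≤ g - 1 → u i * u (i + 1) * u i = u (i + 1) * u i * u (i + 1))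
    (hC1 : ∀ i j, 1 ≤ i → i ≤ g - 1 → 1 ≤ j → j ≤ g - 1 → (i + 2 ≤ j ∨ j + 2 ≤ i) →
      a i * u j = u j * a i)
    (hC3 : ∀ i, 1 ≤ i → i ≤ g - 2 → a (i + 1) * u i * u (i + 1) = u i * u (i + 1) * a i)
    (hC4 : a 1 * u 1 * a 1 = u 1)
    (hC5 : u 2 * a 1 * a 2 * u 1 = a 1 * a 2)
    (hB4a : prodDesc u (g - 1) * prodAsc u (g - 1) = 1)
    (hB3 : (prodAsc u (g - 1)) ^ g = 1)
    (hD : a 1 * (((List.range (g - 2)).map (fun i => a (i + 2))).prod *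
            (((List.range (g - 2)).reverse).map (fun i => u (i + 2))).prod) * a 1 =
          ((List.range (g - 2)).map (fun i => a (i + 2))).prod *
            (((List.range (g - 2)).reverse).map (fun i => u (i + 2))).prod)
    :
    ∀ i, 1 ≤ i → i ≤ g - 1 →
      (prodAsc a (g - 1) * prodDesc u (g - 1)) * a i =
        a i * (prodAsc a (g - 1) * prodDesc u (g - 1)) ∧
      u i * (prodAsc a (g - 1) * prodDesc u (g - 1)) * u i =
        prodAsc a (g - 1) * prodDesc u (g - 1) := by
  intro i hi hig
  obtain ⟨m, rfl⟩ : ∃ m, g = m + 2 := ⟨g - 2, by omega⟩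
  simp only [show m + 2 - 1 = m + 1 from rfl, show m + 2 - 2 = m from rfl] at *
  have hU : prodDesc u (m + 1) = (prodAsc u (m + 1))⁻¹ := eq_inv_of_mul_eq_one_left hB4a
  have hA := shifts_prodAsc_of_braid ha1 ha2
  have hVu := shifts_prodAsc_of_braid hu1 hu2
  have hVa : Shifts (prodAsc u (m + 1)) a (m + 1) :=
    shifts_prodAsc hC1 fun i hi hin => by rw [← mul_assoc]; exact hC3 i hi (by omega)
  have htail : Commute (a 1) (prodAsc (fun j => a (j + 1)) m * (prodAsc u (m + 1))⁻¹) := by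
    rw [← hU, prodDesc_succ', ← mul_assoc]
    exact commute_mul_of_mul_mul_eq hD hC4
  have hrV := (commute_prodAsc_of_shifts hVa hB3 htail).mul_left (Commute.refl _).inv_left
  have hE4 : ∀ k, k + 2 ≤ m + 1 → u (k + 2) * (prodAsc a (m + 1) * (prodAsc u (m + 1))⁻¹) *
      u (k + 2) = prodAsc a (m + 1) * (prodAsc u (m + 1))⁻¹ :=
    fun k hk => mul_prodAsc_mul_inv_mul_eq hC1 hVa hVu hC5 hk
  rw [hU]
  refine ⟨commute_prodAsc_mul_inv hA hVa htail hi hig, ?_⟩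
  obtain rfl | hi2 := eq_or_lt_of_le hi
  · exact mul_mul_self_eq_of_commute_prodAsc hVu hB3 hrV fun hm => hE4 0 (by omega)
  · obtain ⟨k, rfl⟩ : ∃ k, i = k + 2 := ⟨i - 2, by omega⟩
    exact hE4 k hig

/-- relations (E3a) and (E4a): r a_i = a_i r and u_i r u_i = r for all
1 ≤ i ≤ g-1, where r = a_1 ⋯ a_{g-1} u_{g-1} ⋯ u_1, in the presence of the closed-surface
relations (B3), (B4a) and (D). -/
theorem rel_E3a_E4a (g : ℕ) (a u : ℕ → G)
    (ha1 : ∀ i j, 1 ≤ i → i + 2 ≤ j → j ≤ g - 1 → a i * a j = a j * a i)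
    (ha2 : ∀ i, 1 ≤ i → i + 1 ≤ g - 1 → a i * a (i + 1) * a i = a (i + 1) * a i * a (i + 1))
    (hu1 : ∀ i j, 1 ≤ i → i + 2 ≤ j → j ≤ g - 1 → u i * u j = u j * u i)
    (hu2 : ∀ i, 1 ≤ i → i + 1 ≤ g - 1 → u i * u (i + 1) * u i = u (i + 1) * u i * u (i + 1))
    (hC1 : ∀ i j, 1 ≤ i → i ≤ g - 1 → 1 ≤ j → j ≤ g - 1 → (i + 2 ≤ j ∨ j + 2 ≤ i) →
      a i * u j = u j * a i)
    (hC2 : ∀ i, 1 ≤ i → i ≤ g - 2 → a i * u (i + 1) * u i = u (i + 1) * u i * a (i + 1))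
    (hC3 : ∀ i, 1 ≤ i → i ≤ g - 2 → a (i + 1) * u i * u (i + 1) = u i * u (i + 1) * a i)
    (hC4 : a 1 * u 1 * a 1 = u 1)
    (hC5 : u 2 * a 1 * a 2 * u 1 = a 1 * a 2)
(hB4a : prodDesc u (g - 1) * prodAsc u (g - 1) = 1)
    (hB3 : (prodAsc u (g - 1)) ^ g = 1)
    (hD : a 1 * (((List.range (g - 2)).map (fun i => a (i + 2))).prod *
            (((List.range (g - 2)).reverse).map (fun i => u (i + 2))).prod) * a 1 =
          ((List.range (g - 2)).map (fun i => a (i + 2))).prod *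
            (((List.range (g - 2)).reverse).map (fun i => u (i + 2))).prod)
    :
    ∀ i, 1 ≤ i → i ≤ g - 1 →
      (prodAsc a (g - 1) * prodDesc u (g - 1)) * a i =
        a i * (prodAsc a (g - 1) * prodDesc u (g - 1)) ∧
      u i * (prodAsc a (g - 1) * prodDesc u (g - 1)) * u i =
        prodAsc a (g - 1) * prodDesc u (g - 1) :=
  rel_E3a_E4a_general g a u ha1 ha2 hu1 hu2 hC1 hC3 hC4 hC5 hB4a hB3 hD
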